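/- arXiv:1211.4881 — 4 statements merged into one kernel-verified Lean document; each statement's English description precedes it below -/
import Mathlib

section
/- Under the same setup (v in pi_d(n,k), W_{m,l}(v) as defined, alpha affine of degree at most one, with alpha(0,0) nonzero), for any complex tau: the double sum over l=0..k and m=l..n of [alpha(0,0)/alpha(l,m)] * C(tau - alpha(l,m), k-l) * C(alpha(l,m), l) / C(k,l) * W_{m,l}(v) equals C(tau,k). -/
/-!
Put `x = C` and `u_r = A + (r + 1) B`, and let `M` be the multiset containing `u_r` with
multiplicity `v_r`. A sub-multiset `S ≤ M` with `i_r` copies of `u_r` occurs `∏ C(v_r, i_r)` times,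
and `|S| = l`, `ΣS = A l + B m` for `l = ∑ i_r`, `m = ∑ (r + 1) i_r`. Since `α(l, m) = x + ΣS` and
`(α)_l / α = (α - 1)_{l-1}` (falling factorials), the double sum is `1 / k!` times
`∑_{S ≤ M} x (x + ΣS - 1)_{|S|-1} (τ - x - ΣS)_{k-|S|}`, the term of `S = ∅` being `(τ - x)_k`.

This Abel–Hurwitz type sum equals `(τ)_k`, by induction on `M`: adding an element `a` turns it
into `τ - k` times the old sum plus `x (P(x + a - 1) - P(x - 1))`, where
`P(X) = ∑_{S ≤ M} (X + ΣS)_{|S|} (τ - 1 - ΣS - X)_{k-|S|}`. The polynomial `P` is constant: the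
analogous sum with `(X + ΣS)_{|S|+j}` has degree at most `j`, because adding an element to `M`
changes it by a multiple of itself plus a forward difference of the sum for `j + 1`, and forward
differences lower the degree.
-/

open Finset

noncomputable def gchoose (x : ℂ) (j : ℕ) : ℂ :=
  (∏ i ∈ Finset.range j, (x - (i : ℂ))) / (j.factorial : ℂ)

/-- The set of tuples `i : Fin d → ℕ` with `∑ i_j = k` and `∑ j * i_j = n`
(indices weighted by `j+1`). -/
def parts (d n k : ℕ) : Finset (Fin d → ℕ) :=
  (Fintype.piFinset fun _ : Fin d => Finset.range (n + 1)).filter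
    fun i => (∑ j, i j) = k ∧ (∑ j : Fin d, ((j : ℕ) + 1) * i j) = n

/-- `W d m l v = ∑_{i ∈ π_d(m,l)} ∏_r C(v_r, i_r)`. -/
def W (d m l : ℕ) (v : Fin d → ℕ) : ℕ :=
  ∑ i ∈ parts d m l, ∏ r, (v r).choose (i r)

open Polynomial

section Abel

variable {R : Type*} [CommRing R]

lemma natDegree_taylor_sub_le {p : R[X]} {n : ℕ} (hp : p.natDegree ≤ n + 1) (r : R) :
    (taylor r p - p).natDegree ≤ n := by
  refine natDegree_le_iff_coeff_eq_zero.2 fun m hm => ?_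
  have hconst : hasseDeriv m p = C (p.coeff m) := by
    rw [eq_C_of_natDegree_eq_zero (p := hasseDeriv m p)
        (by have := natDegree_hasseDeriv_le p m; omega),
      hasseDeriv_coeff, zero_add, Nat.choose_self, Nat.cast_one, one_mul]
  rw [coeff_sub, taylor_coeff, hconst, eval_C, sub_self]

lemma natDegree_descPochhammer_le (n : ℕ) : (descPochhammer R n).natDegree ≤ n := by
  induction n with
  | zero => simp
  | succ n ih =>
    rw [descPochhammer_succ_right]
    refine natDegree_mul_le.trans (add_le_add ih ?_)
    exact (natDegree_sub_le _ _).trans (by simp [natDegree_X_le])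

lemma descPochhammer_succ_comp (n : ℕ) (p : R[X]) :
    (descPochhammer R (n + 1)).comp p = (descPochhammer R n).comp p * (p - C (n : R)) := by
  simp [descPochhammer_succ_right, mul_comp]

noncomputable def abelPoly (j : ℕ) (y : R) (M : Multiset R) : R[X] :=
  (M.powerset.map fun S => (descPochhammer R (S.card + j)).comp (X + C S.sum) *
    (descPochhammer R (M.card - S.card)).comp (C (y - S.sum) - X)).sum

lemma abelPoly_cons (j : ℕ) (y a : R) (M : Multiset R) :
    abelPoly j y (a ::ₘ M) = C (y - M.card - j) * abelPoly j y M
      + (taylor a (abelPoly (j + 1) y M) - abelPoly (j + 1) y M) := by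
  have h_without : ∀ S ∈ M.powerset,
      (descPochhammer R (S.card + j)).comp (X + C S.sum) *
        (descPochhammer R ((a ::ₘ M).card - S.card)).comp (C (y - S.sum) - X) =
      C (y - M.card - j) * ((descPochhammer R (S.card + j)).comp (X + C S.sum) *
        (descPochhammer R (M.card - S.card)).comp (C (y - S.sum) - X)) -
      (descPochhammer R (S.card + (j + 1))).comp (X + C S.sum) *
        (descPochhammer R (M.card - S.card)).comp (C (y - S.sum) - X) := by
    intro S hS
    have hle : S.card ≤ M.card := Multiset.card_le_card (Multiset.mem_powerset.1 hS)
    rw [Multiset.card_cons, Nat.sub_add_comm hle, ← add_assoc, descPochhammer_succ_comp,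
      descPochhammer_succ_comp, Nat.cast_sub hle]
    simp only [Nat.cast_add, C_sub, C_add]
    ring
  have h_with : ∀ S ∈ M.powerset,
      (descPochhammer R ((a ::ₘ S).card + j)).comp (X + C (a ::ₘ S).sum) *
        (descPochhammer R ((a ::ₘ M).card - (a ::ₘ S).card)).comp
          (C (y - (a ::ₘ S).sum) - X) =
      taylor a ((descPochhammer R (S.card + (j + 1))).comp (X + C S.sum) *
        (descPochhammer R (M.card - S.card)).comp (C (y - S.sum) - X)) := by
    intro S _
    rw [taylor_mul, taylor_apply, taylor_apply, comp_assoc, comp_assoc]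
    simp only [Multiset.card_cons, Multiset.sum_cons, add_comp, sub_comp, X_comp, C_comp,
      Nat.add_sub_add_right, C_add, C_sub]
    rw [show S.card + 1 + j = S.card + (j + 1) by omega]
    congr 2 <;> ring
  rw [abelPoly, Multiset.powerset_cons, Multiset.map_add, Multiset.sum_add, Multiset.map_map,
    Multiset.map_congr rfl h_without, Function.comp_def, Multiset.map_congr rfl h_with,
    Multiset.sum_map_sub, Multiset.sum_map_mul_left]
  simp only [abelPoly, map_multiset_sum, Multiset.map_map, Function.comp_def]
  ring

lemma natDegree_abelPoly_le (M : Multiset R) (j : ℕ) (y : R) :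
    (abelPoly j y M).natDegree ≤ j := by
  induction M using Multiset.induction_on generalizing j with
  | empty => simpa [abelPoly] using natDegree_descPochhammer_le (R := R) j
  | cons a M ih =>
    rw [abelPoly_cons]
    exact (natDegree_add_le _ _).trans <| max_le ((natDegree_C_mul_le _ _).trans (ih j))
      (natDegree_taylor_sub_le (ih (j + 1)) a)

lemma eval_abelPoly (j : ℕ) (y : R) (M : Multiset R) (c : R) :
    (abelPoly j y M).eval c =
      (M.powerset.map fun S => (descPochhammer R (S.card + j)).eval (c + S.sum) *
        (descPochhammer R (M.card - S.card)).eval (y - S.sum - c)).sum := by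
  simp [abelPoly, eval_multisetSum, Multiset.map_map, eval_comp, add_comm c]

lemma eval_abelPoly_zero_eq (y : R) (M : Multiset R) (c c' : R) :
    (abelPoly 0 y M).eval c = (abelPoly 0 y M).eval c' := by
  rw [eq_C_of_natDegree_le_zero (natDegree_abelPoly_le M 0 y), eval_C, eval_C]

noncomputable def abelTerm (k : ℕ) (x τ : R) (l : ℕ) (s : R) : R :=
  if l = 0 then (descPochhammer R k).eval (τ - x)
  else x * (descPochhammer R (l - 1)).eval (x + s - 1) *
    (descPochhammer R (k - l)).eval (τ - x - s)

theorem sum_powerset_abelTerm (M : Multiset R) (x τ : R) :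
    (M.powerset.map fun S => abelTerm M.card x τ S.card S.sum).sum =
      (descPochhammer R M.card).eval τ := by
  induction M using Multiset.induction_on with
  | empty => simp [abelTerm]
  | cons a M ih =>
    -- both right-hand sides are written as summands of `eval_abelPoly 0 (τ - 1) M`
    have h_without : ∀ S ∈ M.powerset, abelTerm (M.card + 1) x τ S.card S.sum =
        (τ - M.card) * abelTerm M.card x τ S.card S.sum -
          x * ((descPochhammer R (S.card + 0)).eval (x - 1 + S.sum) *
            (descPochhammer R (M.card - S.card)).eval (τ - 1 - S.sum - (x - 1))) := by
      intro S hS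
      have hle : S.card ≤ M.card := Multiset.card_le_card (Multiset.mem_powerset.1 hS)
      rw [show x - 1 + S.sum = x + S.sum - 1 by ring,
        show τ - 1 - S.sum - (x - 1) = τ - x - S.sum by ring]
      rcases Nat.eq_zero_or_pos S.card with h0 | hpos
      · rw [Multiset.card_eq_zero.1 h0]
        simp only [abelTerm, Multiset.card_zero, Multiset.sum_zero, if_true,
          descPochhammer_succ_eval, descPochhammer_zero, eval_one, add_zero, sub_zero, tsub_zero]
        ring
      · obtain ⟨l, hl⟩ : ∃ l, S.card = l + 1 := ⟨S.card - 1, by omega⟩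
        rw [hl] at hle ⊢
        simp only [abelTerm, Nat.succ_ne_zero, if_false, Nat.add_sub_cancel, Nat.sub_add_comm hle,
          descPochhammer_succ_eval, Nat.cast_sub hle]
        push_cast
        ring
    have h_with : ∀ S ∈ M.powerset, abelTerm (M.card + 1) x τ (a ::ₘ S).card (a ::ₘ S).sum =
        x * ((descPochhammer R (S.card + 0)).eval (x + a - 1 + S.sum) *
          (descPochhammer R (M.card - S.card)).eval (τ - 1 - S.sum - (x + a - 1))) := by
      intro S _
      simp only [abelTerm, Multiset.card_cons, Multiset.sum_cons, Nat.succ_ne_zero, if_false,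
        Nat.add_sub_cancel, Nat.add_sub_add_right, add_zero]
      rw [show x + (a + S.sum) - 1 = x + a - 1 + S.sum by ring,
        show τ - x - (a + S.sum) = τ - 1 - S.sum - (x + a - 1) by ring, mul_assoc]
    rw [Multiset.powerset_cons, Multiset.map_add, Multiset.sum_add, Multiset.map_map,
      Multiset.card_cons, Multiset.map_congr rfl h_without, Function.comp_def,
      Multiset.map_congr rfl h_with, Multiset.sum_map_sub, Multiset.sum_map_mul_left,
      Multiset.sum_map_mul_left, Multiset.sum_map_mul_left, ih, ← eval_abelPoly, ← eval_abelPoly,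
      eval_abelPoly_zero_eq _ _ (x + a - 1) (x - 1), descPochhammer_succ_eval]
    ring

end Abel

section PowersetSums

variable {α β : Type*} [AddCommMonoid β]

lemma Multiset.powerset_add (s t : Multiset α) :
    (s + t).powerset = s.powerset.bind fun S => t.powerset.map (S + ·) := by
  rw [← Multiset.antidiagonal_map_fst, Multiset.antidiagonal_add, Multiset.map_bind,
    ← Multiset.antidiagonal_map_fst, Multiset.bind_map]
  simp [← Multiset.antidiagonal_map_fst, Multiset.map_map]

lemma Multiset.sum_map_powerset_add (s t : Multiset α) (f : Multiset α → β) :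
    ((s + t).powerset.map f).sum =
      (s.powerset.map fun S => (t.powerset.map fun T => f (S + T)).sum).sum := by
  rw [Multiset.powerset_add, Multiset.map_bind, Multiset.sum_bind]
  simp [Multiset.map_map]

lemma Multiset.sum_map_powerset_replicate (n : ℕ) (a : α) (f : Multiset α → β) :
    ((Multiset.replicate n a).powerset.map f).sum =
      ∑ j ∈ Finset.range (n + 1), n.choose j • f (Multiset.replicate j a) := by
  induction n generalizing f with
  | zero => simp
  | succ n ih =>
    rw [Multiset.replicate_succ, Multiset.powerset_cons, Multiset.map_add, Multiset.sum_add,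
      Multiset.map_map, ih, Function.comp_def, ih,
      Finset.sum_choose_succ_nsmul (fun i _ => f (Multiset.replicate i a))]
    simp [Multiset.replicate_succ]

lemma Fin.sum_piFinset_succ {n : ℕ} (S : Fin (n + 1) → Finset α) (f : (Fin (n + 1) → α) → β) :
    ∑ i ∈ Fintype.piFinset S, f i =
      ∑ a ∈ S 0, ∑ i ∈ Fintype.piFinset (Fin.tail S), f (Fin.cons a i) := by
  rw [← Finset.sum_product']
  exact Finset.sum_equiv (Fin.consEquiv _).symm
    (fun i => by simpa [Fin.consEquiv] using Fin.mem_piFinset_iff_zero_tail)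
    (by simp [Fin.consEquiv])

lemma Multiset.sum_map_powerset_sum_replicate {d : ℕ} (v : Fin d → ℕ) (u : Fin d → α)
    (f : Multiset α → β) :
    ((∑ r, Multiset.replicate (v r) (u r)).powerset.map f).sum =
      ∑ i ∈ Fintype.piFinset fun r => Finset.range (v r + 1),
        (∏ r, (v r).choose (i r)) • f (∑ r, Multiset.replicate (i r) (u r)) := by
  induction d generalizing f with
  | zero => simp
  | succ d ih =>
    rw [Fin.sum_univ_succ, Multiset.sum_map_powerset_add, Multiset.sum_map_powerset_replicate,
      Fin.sum_piFinset_succ]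
    refine Finset.sum_congr rfl fun j _ => ?_
    rw [ih, Finset.smul_sum]
    refine Finset.sum_congr rfl fun i _ => ?_
    simp [Fin.prod_univ_succ, Fin.sum_univ_succ, mul_smul]

end PowersetSums

lemma le_sum_succ_mul {d : ℕ} (i : Fin d → ℕ) (r : Fin d) :
    i r ≤ ∑ r' : Fin d, ((r' : ℕ) + 1) * i r' :=
  (Nat.le_mul_of_pos_left _ r.val.succ_pos).trans
    (single_le_sum (f := fun r' : Fin d => ((r' : ℕ) + 1) * i r') (fun _ _ => Nat.zero_le _)
      (mem_univ r))

lemma W_eq_sum_filter (d m l : ℕ) (v : Fin d → ℕ) :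
    W d m l v = ∑ i ∈ (Fintype.piFinset fun r => range (v r + 1)).filter
      (fun i => ∑ r, i r = l ∧ ∑ r : Fin d, ((r : ℕ) + 1) * i r = m),
        ∏ r, (v r).choose (i r) := by
  refine (sum_subset (fun i hi => ?_) fun i hi hni => ?_).symm
  · simp only [parts, mem_filter, Fintype.mem_piFinset, mem_range] at hi ⊢
    exact ⟨fun r => hi.2.2 ▸ Nat.lt_succ_of_le (le_sum_succ_mul i r), hi.2⟩
  · obtain ⟨r, hr⟩ : ∃ r, v r < i r := by
      by_contra! h
      simp only [parts, mem_filter] at hi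
      exact hni (mem_filter.2
        ⟨Fintype.mem_piFinset.2 fun r => mem_range.2 (Nat.lt_succ_of_le (h r)), hi.2⟩)
    exact prod_eq_zero (mem_univ r) (Nat.choose_eq_zero_of_lt hr)

lemma W_zero_right {d m : ℕ} (hm : m ≠ 0) (v : Fin d → ℕ) : W d m 0 v = 0 := by
  refine sum_eq_zero fun i hi => absurd ?_ hm
  obtain ⟨-, hl, rfl⟩ := mem_filter.1 hi
  have hi0 : ∀ r, i r = 0 := by simpa using hl
  simp [hi0]

theorem sum_W_nsmul {β : Type*} [AddCommMonoid β] {d k n : ℕ} {v : Fin d → ℕ}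
    (hs : ∑ r, v r = k) (hw : ∑ r : Fin d, ((r : ℕ) + 1) * v r = n) (g : ℕ → ℕ → β) :
    ∑ l ∈ range (k + 1), ∑ m ∈ Icc l n, W d m l v • g l m =
      ∑ i ∈ Fintype.piFinset fun r => range (v r + 1),
        (∏ r, (v r).choose (i r)) • g (∑ r, i r) (∑ r : Fin d, ((r : ℕ) + 1) * i r) := by
  simp_rw [W_eq_sum_filter, sum_smul, sum_filter]
  rw [sum_congr rfl fun l _ => sum_comm, sum_comm]
  refine sum_congr rfl fun i hi => ?_
  have hle : ∀ r, i r ≤ v r := fun r =>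
    Nat.le_of_lt_succ (mem_range.1 (Fintype.mem_piFinset.1 hi r))
  have hl : ∑ r, i r ∈ range (k + 1) :=
    mem_range.2 (Nat.lt_succ_of_le (hs ▸ sum_le_sum fun r _ => hle r))
  have hm : ∑ r : Fin d, ((r : ℕ) + 1) * i r ∈ Icc (∑ r, i r) n :=
    mem_Icc.2 ⟨sum_le_sum fun r _ => Nat.le_mul_of_pos_left _ r.val.succ_pos,
      hw ▸ sum_le_sum fun r _ => Nat.mul_le_mul_left _ (hle r)⟩
  rw [sum_eq_single_of_mem _ hl fun l _ hne => sum_eq_zero fun m _ => if_neg fun h => hne h.1.symm,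
    sum_eq_single_of_mem _ hm fun m _ hne => if_neg fun h => hne h.2.symm, if_pos ⟨rfl, rfl⟩]

lemma sum_sum_replicate_add_mul {R : Type*} [CommSemiring R] {d : ℕ} (A B : R) (i : Fin d → ℕ) :
    (∑ r, Multiset.replicate (i r) (A + ((r : ℕ) + 1) * B)).sum =
      A * ((∑ r, i r : ℕ) : R) + B * ((∑ r : Fin d, ((r : ℕ) + 1) * i r : ℕ) : R) := by
  simp only [Multiset.sum_sum, Multiset.sum_replicate, nsmul_eq_mul, Nat.cast_sum, Nat.cast_mul,
    Nat.cast_add, Nat.cast_one, mul_sum, ← sum_add_distrib]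
  exact sum_congr rfl fun r _ => by ring

lemma gchoose_eq_descPochhammer_eval (x : ℂ) (j : ℕ) :
    gchoose x j = (descPochhammer ℂ j).eval x / j.factorial := by
  rw [gchoose, descPochhammer_eval_eq_prod_range]

lemma div_mul_gchoose_mul_gchoose_div_choose {k l : ℕ} (hl : l ≤ k) {x α : ℂ} (hα : α ≠ 0)
    (h0 : l = 0 → α = x) (τ : ℂ) :
    x / α * gchoose (τ - α) (k - l) * gchoose α l / k.choose l =
      abelTerm k x τ l (α - x) / k.factorial := by
  have hfact : (k.choose l : ℂ) * l.factorial * (k - l).factorial = k.factorial := by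
    exact_mod_cast Nat.choose_mul_factorial_mul_factorial hl
  simp only [gchoose_eq_descPochhammer_eval, ← hfact]
  rcases l with _ | l
  · obtain rfl := h0 rfl
    simp only [abelTerm, if_true, tsub_zero, Nat.choose_zero_right, descPochhammer_zero, eval_one,
      Nat.factorial_zero, Nat.cast_one]
    field_simp
  · rw [abelTerm, if_neg l.succ_ne_zero, descPochhammer_succ_left, eval_mul, eval_X, eval_comp,
      eval_sub, eval_X, eval_one, Nat.add_sub_cancel,
      show x + (α - x) - 1 = α - 1 by ring, show τ - x - (α - x) = τ - α by ring]
    field_simp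

theorem stmt3_general (d k n : ℕ) (v : Fin d → ℕ)
    (hs : ∑ r, v r = k) (hw : ∑ r : Fin d, ((r : ℕ) + 1) * v r = n)
    (A B C : ℂ)
    (hα : ∀ l m : ℕ, l ≤ k → m ≤ n → A * l + B * m + C ≠ 0)
    (τ : ℂ) :
    ∑ l ∈ Finset.range (k + 1), ∑ m ∈ Finset.Icc l n,
      (C / (A * l + B * m + C)) *
        gchoose (τ - (A * l + B * m + C)) (k - l) * gchoose (A * l + B * m + C) l /
          (k.choose l : ℂ) * (W d m l v : ℂ)
      = gchoose τ k := by
  have hterm : ∀ l ∈ range (k + 1), ∀ m ∈ Icc l n,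
      C / (A * l + B * m + C) * gchoose (τ - (A * l + B * m + C)) (k - l) *
          gchoose (A * l + B * m + C) l / (k.choose l : ℂ) * (W d m l v : ℂ) =
        W d m l v • (abelTerm k C τ l (A * l + B * m) / k.factorial) := by
    intro l hl m hm
    have hlk : l ≤ k := Nat.le_of_lt_succ (mem_range.1 hl)
    by_cases hW : l = 0 ∧ m ≠ 0
    · rw [hW.1, W_zero_right hW.2]
      simp
    · rw [nsmul_eq_mul, div_mul_gchoose_mul_gchoose_div_choose hlk
        (hα l m hlk (mem_Icc.1 hm).2) (fun h => by simp [h, not_and_not_right.1 hW h]) τ,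
        add_sub_cancel_right, mul_comm]
  set u : Fin d → ℂ := fun r => A + ((r : ℕ) + 1) * B
  have hcard : ∀ i : Fin d → ℕ, (∑ r, Multiset.replicate (i r) (u r)).card = ∑ r, i r := by
    simp [Multiset.card_sum]
  rw [Finset.sum_congr rfl fun l hl => Finset.sum_congr rfl (hterm l hl), sum_W_nsmul hs hw]
  simp_rw [← sum_sum_replicate_add_mul, ← hcard]
  rw [← Multiset.sum_map_powerset_sum_replicate v u
      fun S => abelTerm k C τ S.card S.sum / k.factorial, Multiset.sum_map_div, ← hs, ← hcard v,
    sum_powerset_abelTerm, gchoose_eq_descPochhammer_eval]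

theorem stmt3 (d k n : ℕ) (hk : 0 < k) (v : Fin d → ℕ)
    (hs : ∑ r, v r = k) (hw : ∑ r : Fin d, ((r : ℕ) + 1) * v r = n)
    (A B C : ℂ)
    (hα : ∀ l m : ℕ, l ≤ k → m ≤ n → A * l + B * m + C ≠ 0)
    (τ : ℂ) :
    ∑ l ∈ Finset.range (k + 1), ∑ m ∈ Finset.Icc l n,
      (C / (A * l + B * m + C)) *
        gchoose (τ - (A * l + B * m + C)) (k - l) * gchoose (A * l + B * m + C) l /
          (k.choose l : ℂ) * (W d m l v : ℂ)
      = gchoose τ k :=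
  stmt3_general d k n v hs hw A B C hα τ
end

section
/- Hagen–Rothe identity (second form): for complex numbers x, y, z with x + l*z nonzero for 0 <= l <= k, sum over l=0..k of [x/(x+l*z)] * C(x+l*z, l) * C(y+(k-l)*z, k-l) equals C(x+y+k*z, k). -/
/-!
Write the weight `x / (x + l z) * C(x + l z, l)` in division-free form; then both sides are
polynomials in `x`. By Pascal's rule, replacing `x` by `x + 1` changes the left side at order
`k + 1` by the left side at order `k` evaluated at `x + z`, and the right side likewise. So, by
induction on `k`, the difference of the two sides is a 1-periodic polynomial in `x`; it vanishes
at `x = 0`, hence identically.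
-/

open Finset

open Polynomial

theorem gchoose_eq_choose (x : ℂ) (j : ℕ) : gchoose x j = Ring.choose x j := by
  rw [Ring.choose_eq_smul, gchoose, ← descPochhammer_eval_eq_prod_range, ← aeval_eq_smeval,
    aeval_def, eval₂_eq_eval_map, descPochhammer_map, smul_eq_mul, div_eq_inv_mul]

theorem Polynomial.eq_zero_of_eval_add_one {F : Type*} [CommRing F] [IsDomain F] [CharZero F]
    {p : F[X]} (h0 : p.eval 0 = 0) (hp : ∀ x, p.eval (x + 1) = p.eval x) : p = 0 := by
  have hnat (n : ℕ) : p.IsRoot n := by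
    induction n with
    | zero => simpa using h0
    | succ n ih => simpa [IsRoot, hp] using ih
  exact eq_zero_of_infinite_isRoot p <|
    Set.infinite_of_injective_forall_mem Nat.cast_injective hnat

section BinomialRing

variable {R S : Type*} [CommRing R] [BinomialRing R] [CommRing S] [BinomialRing S]

theorem Ring.choose_add_one_sub_choose (r : R) (l : ℕ) :
    Ring.choose (r + 1) (l + 1) - Ring.choose r (l + 1) = Ring.choose r l := by
  rw [Ring.choose_succ_succ, add_sub_cancel_right]

theorem Ring.succ_mul_choose_succ (r : R) (l : ℕ) :
    ((l + 1 : ℕ) : R) * Ring.choose r (l + 1) = r * Ring.choose (r - 1) l := by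
  simpa [nsmul_eq_mul] using Ring.choose_smul_choose r (Nat.le_add_left 1 l)

/-- `x / (x + l z) * C(x + l z, l)`, rewritten with `l C(w, l) = w C(w - 1, l - 1)`. -/
noncomputable def abelChoose (z x : R) : ℕ → R
  | 0 => 1
  | l + 1 => Ring.choose (x + ((l + 1 : ℕ) : R) * z) (l + 1) -
      z * Ring.choose (x + ((l + 1 : ℕ) : R) * z - 1) l

noncomputable def abelConv (z x y : R) (k : ℕ) : R :=
  ∑ l ∈ range (k + 1), abelChoose z x l * Ring.choose (y + ((k - l : ℕ) : R) * z) (k - l)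

theorem map_abelChoose (f : R →+* S) (z x : R) (l : ℕ) :
    f (abelChoose z x l) = abelChoose (f z) (f x) l := by
  cases l <;> simp [abelChoose, Ring.map_choose]

theorem map_abelConv (f : R →+* S) (z x y : R) (k : ℕ) :
    f (abelConv z x y k) = abelConv (f z) (f x) (f y) k := by
  simp [abelConv, map_abelChoose, Ring.map_choose]

theorem abelChoose_add_one_sub (z x : R) (l : ℕ) :
    abelChoose z (x + 1) (l + 1) - abelChoose z x (l + 1) = abelChoose z (x + z) l := by
  cases l with
  | zero => simp [abelChoose]
  | succ l =>
    set w := x + ((l + 2 : ℕ) : R) * z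
    have hw : x + 1 + ((l + 2 : ℕ) : R) * z = w + 1 := by ring
    have hw' : x + z + ((l + 1 : ℕ) : R) * z = w := by simp only [w]; push_cast; ring
    have hpascal := Ring.choose_add_one_sub_choose (w - 1) l
    rw [sub_add_cancel] at hpascal
    simp only [abelChoose, hw, hw', add_sub_cancel_right]
    linear_combination Ring.choose_add_one_sub_choose w (l + 1) - z * hpascal

theorem abelConv_add_one_sub (z x y : R) (k : ℕ) :
    abelConv z (x + 1) y (k + 1) - abelConv z x y (k + 1) = abelConv z (x + z) y k := by
  simp only [abelConv, ← sum_sub_distrib, ← sub_mul]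
  rw [sum_range_succ']
  simp only [abelChoose_add_one_sub, Nat.add_sub_add_right]
  simp [abelChoose]

end BinomialRing

section Field

variable {F : Type*} [Field F] [CharZero F]

theorem abelChoose_zero_left (z : F) (l : ℕ) : abelChoose z 0 (l + 1) = 0 := by
  have hl : ((l + 1 : ℕ) : F) ≠ 0 := Nat.cast_ne_zero.mpr l.succ_ne_zero
  have key := Ring.succ_mul_choose_succ (((l + 1 : ℕ) : F) * z) l
  rw [abelChoose, zero_add, sub_eq_zero]
  apply mul_left_cancel₀ hl
  linear_combination key

theorem abelConv_zero_left (z y : F) (k : ℕ) :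
    abelConv z 0 y k = Ring.choose (y + (k : F) * z) k := by
  rw [abelConv, sum_eq_single 0]
  · simp [abelChoose]
  · rintro (_ | l) - hl
    · exact absurd rfl hl
    · rw [abelChoose_zero_left, zero_mul]
  · simp

theorem abelChoose_eq_div_mul_choose {z x : F} {l : ℕ} (h : x + (l : F) * z ≠ 0) :
    abelChoose z x l = x / (x + (l : F) * z) * Ring.choose (x + (l : F) * z) l := by
  cases l with
  | zero => simp_all [abelChoose]
  | succ l =>
    have key := Ring.succ_mul_choose_succ (x + ((l + 1 : ℕ) : F) * z) l
    rw [abelChoose, eq_comm, div_mul_eq_mul_div, div_eq_iff h]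
    linear_combination (-z) * key

theorem abelConv_eq_choose (z x y : F) (k : ℕ) :
    abelConv z x y k = Ring.choose (x + y + (k : F) * z) k := by
  induction k generalizing x with
  | zero => simp [abelConv, abelChoose]
  | succ k ih =>
    set P : F[X] := abelConv (C z) X (C y) (k + 1) -
      Ring.choose (X + C y + ((k + 1 : ℕ) : F[X]) * C z) (k + 1)
    have hP (x : F) : P.eval x =
        abelConv z x y (k + 1) - Ring.choose (x + y + ((k + 1 : ℕ) : F) * z) (k + 1) := by
      rw [← coe_evalRingHom]
      simp only [P, map_sub, map_abelConv, Ring.map_choose, map_add, map_mul, map_natCast,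
        coe_evalRingHom, eval_C, eval_X]
    have hP0 : P.eval 0 = 0 := by
      rw [hP, abelConv_zero_left, zero_add, sub_self]
    have hP1 (x : F) : P.eval (x + 1) = P.eval x := by
      have hw : x + 1 + y + ((k + 1 : ℕ) : F) * z = x + y + ((k + 1 : ℕ) : F) * z + 1 := by
        ring
      have hw' : x + z + y + (k : F) * z = x + y + ((k + 1 : ℕ) : F) * z := by push_cast; ring
      rw [hP, hP, sub_eq_sub_iff_sub_eq_sub, abelConv_add_one_sub, ih, hw, hw',
        Ring.choose_add_one_sub_choose]
    simpa [hP, sub_eq_zero] using congr_arg (eval x) (eq_zero_of_eval_add_one hP0 hP1)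

end Field

theorem stmt7 (k : ℕ) (x y z : ℂ)
    (hx : ∀ l : ℕ, l ≤ k → x + l * z ≠ 0) :
    ∑ l ∈ Finset.range (k + 1),
      (x / (x + l * z)) * gchoose (x + l * z) l *
        gchoose (y + ((k - l : ℕ) : ℂ) * z) (k - l)
      = gchoose (x + y + k * z) k := by
  simp only [gchoose_eq_choose]
  rw [← abelConv_eq_choose, abelConv]
  refine sum_congr rfl fun l hl => ?_
  rw [abelChoose_eq_div_mul_choose (hx l (Nat.lt_succ_iff.mp (mem_range.mp hl)))]
end

section
/- Cvijović's convolution identity: for integers 0 < r <= k <= n and any sequence x: C(k,r) * B_{n,k}(x) equals the sum over m from k-r to n-r of C(n,m) * B_{m,k-r}(x) * B_{n-m,r}(x). -/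
/-!
With `f(t) = ∑_{j ≥ 1} x_j t^j / j!`, the multinomial theorem gives
`k! B_{n,k}(x) = n! [t^n] f^k`. The identity is the coefficient of `t^n` in
`f^k = f^(k-r) f^r`, and the convolution only runs over `k - r ≤ m ≤ n - r` because
`t^j` divides `f^j`, so that `B_{m,j}(x) = 0` for `m < j`.
-/

open Finset

/-- The partial Bell polynomial `B_{n,k}(x₁, x₂, …)` evaluated at the sequence `x`. -/
noncomputable def Bell (n k : ℕ) (x : ℕ → ℂ) : ℂ :=
  ∑ i ∈ parts n n k,
    ((n.factorial : ℂ) / ∏ j, ((i j).factorial : ℂ)) *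
      ∏ j : Fin n, (x ((j : ℕ) + 1) / (((j : ℕ) + 1).factorial : ℂ)) ^ (i j)

open Nat PowerSeries

lemma mem_parts {d n k : ℕ} {i : Fin d → ℕ} :
    i ∈ parts d n k ↔ ∑ j, i j = k ∧ ∑ j : Fin d, ((j : ℕ) + 1) * i j = n := by
  refine mem_filter.trans <|
    and_iff_right_of_imp fun ⟨_, hn⟩ => Fintype.mem_piFinset.2 fun j => ?_
  rw [mem_range, Nat.lt_succ_iff, ← hn]
  exact (Nat.le_mul_of_pos_left _ j.succ_pos).trans
    (single_le_sum (f := fun j : Fin d => ((j : ℕ) + 1) * i j) (by simp) (mem_univ j))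

lemma coeff_sum_C_mul_X_pow_succ_pow {R : Type*} [CommSemiring R] {d : ℕ} (y : Fin d → R)
    (n k : ℕ) :
    ((∑ j : Fin d, Polynomial.C (y j) * Polynomial.X ^ ((j : ℕ) + 1)) ^ k).coeff n =
      ∑ i ∈ parts d n k, (multinomial univ i : R) * ∏ j, y j ^ i j := by
  have hterm : ∀ i : Fin d → ℕ, (multinomial univ i : Polynomial R) *
      ∏ j, (Polynomial.C (y j) * Polynomial.X ^ ((j : ℕ) + 1)) ^ i j =
      Polynomial.C ((multinomial univ i : R) * ∏ j, y j ^ i j) *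
        Polynomial.X ^ ∑ j : Fin d, ((j : ℕ) + 1) * i j := fun i => by
    simp only [mul_pow, prod_mul_distrib, ← pow_mul, prod_pow_eq_pow_sum, map_mul, map_natCast,
      map_prod, map_pow, mul_assoc]
  simp only [sum_pow_eq_sum_piAntidiag, Polynomial.finsetSum_coeff, hterm,
    Polynomial.coeff_C_mul_X_pow]
  rw [← sum_filter]
  refine sum_congr (ext fun i => ?_) fun _ _ => rfl
  simp [mem_parts, mem_piAntidiag, eq_comm, implies_true]

noncomputable def egf (x : ℕ → ℂ) : ℂ⟦X⟧ :=
  X * PowerSeries.mk fun j => x (j + 1) / (j + 1)!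

lemma trunc_egf (x : ℕ → ℂ) (n : ℕ) :
    trunc (n + 1) (egf x) =
      ∑ j : Fin n, Polynomial.C (x (j + 1) / (j + 1)!) * Polynomial.X ^ ((j : ℕ) + 1) := by
  ext (_ | m)
  · simp [coeff_trunc, egf, Polynomial.finsetSum_coeff]
  · rw [Fin.sum_univ_eq_sum_range
      (fun j => Polynomial.C (x (j + 1) / (j + 1)!) * Polynomial.X ^ (j + 1))]
    simp [coeff_trunc, egf, Polynomial.finsetSum_coeff]

lemma coeff_egf_pow_eq_coeff_trunc_pow (x : ℕ → ℂ) (n k : ℕ) :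
    (egf x ^ k).coeff n = ((trunc (n + 1) (egf x)) ^ k).coeff n := by
  rw [← coeff_coe_trunc_of_lt n.lt_succ_self, ← trunc_trunc_pow,
    coeff_coe_trunc_of_lt n.lt_succ_self, ← Polynomial.coe_pow, Polynomial.coeff_coe]

lemma factorial_mul_bell (x : ℕ → ℂ) (n k : ℕ) :
    (k ! : ℂ) * Bell n k x = n ! * (egf x ^ k).coeff n := by
  rw [coeff_egf_pow_eq_coeff_trunc_pow, trunc_egf, coeff_sum_C_mul_X_pow_succ_pow, Bell,
    mul_sum, mul_sum]
  refine sum_congr rfl fun i hi => ?_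
  have hk : (∏ j, ((i j)! : ℂ)) * multinomial univ i = k ! := by
    exact_mod_cast (mem_parts.1 hi).1 ▸ multinomial_spec univ i
  rw [← hk]
  have : (∏ j, ((i j)! : ℂ)) ≠ 0 :=
    prod_ne_zero_iff.2 fun j _ => mod_cast (i j).factorial_ne_zero
  field_simp

lemma bell_eq_zero_of_lt (x : ℕ → ℂ) {n k : ℕ} (h : n < k) : Bell n k x = 0 := by
  have hk := factorial_mul_bell x n k
  rw [egf, mul_pow, coeff_X_pow_mul', if_neg h.not_ge, mul_zero] at hk
  exact (mul_eq_zero.1 hk).resolve_left (mod_cast k.factorial_ne_zero)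

lemma choose_mul_bell_add (x : ℕ → ℂ) (a b n : ℕ) :
    ((a + b).choose b : ℂ) * Bell n (a + b) x =
      ∑ m ∈ range (n + 1), (n.choose m : ℂ) * Bell m a x * Bell (n - m) b x := by
  refine mul_left_cancel₀ (Nat.cast_ne_zero.2 (mul_ne_zero a.factorial_ne_zero
    b.factorial_ne_zero) : ((a ! * b ! : ℕ) : ℂ) ≠ 0) ?_
  calc ((a ! * b ! : ℕ) : ℂ) * (((a + b).choose b : ℂ) * Bell n (a + b) x)
      = (a + b)! * Bell n (a + b) x := by
        rw [← add_choose_mul_factorial_mul_factorial]; push_cast; ring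
    _ = ∑ m ∈ range (n + 1),
          n.choose m * (m ! * (egf x ^ a).coeff m) * ((n - m)! * (egf x ^ b).coeff (n - m)) := by
        rw [factorial_mul_bell, pow_add, coeff_mul, Nat.sum_antidiagonal_eq_sum_range_succ_mk,
          mul_sum]
        refine sum_congr rfl fun m hm => ?_
        rw [← choose_mul_factorial_mul_factorial (Nat.lt_succ_iff.1 (mem_range.1 hm))]
        push_cast; ring
    _ = ((a ! * b ! : ℕ) : ℂ) *
          ∑ m ∈ range (n + 1), (n.choose m : ℂ) * Bell m a x * Bell (n - m) b x := by
        simp only [← factorial_mul_bell, mul_sum]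
        refine sum_congr rfl fun m _ => ?_
        push_cast; ring

theorem stmt13_general (r k n : ℕ) (hrk : r ≤ k) (x : ℕ → ℂ) :
    (k.choose r : ℂ) * Bell n k x
      = ∑ m ∈ Finset.Icc (k - r) (n - r), (n.choose m : ℂ) * Bell m (k - r) x * Bell (n - m) r x := by
  obtain ⟨a, rfl⟩ := Nat.exists_eq_add_of_le' hrk
  rw [Nat.add_sub_cancel, choose_mul_bell_add]
  refine (sum_subset (fun m hm => mem_range.2 (by grind)) fun m hmn hm => ?_).symm
  rw [mem_range] at hmn
  rw [mem_Icc, not_and_or, not_le, not_le] at hm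
  rcases hm with hma | hmr
  · rw [bell_eq_zero_of_lt x hma, mul_zero, zero_mul]
  · rw [bell_eq_zero_of_lt x (n := n - m) (by omega), mul_zero]

theorem stmt13 (r k n : ℕ) (hr : 0 < r) (hrk : r ≤ k) (hkn : k ≤ n) (x : ℕ → ℂ) :
    (k.choose r : ℂ) * Bell n k x
      = ∑ m ∈ Finset.Icc (k - r) (n - r), (n.choose m : ℂ) * Bell m (k - r) x * Bell (n - m) r x :=
  stmt13_general r k n hrk x
end

section
/- For integers 0 <= r, complex lambda_1, lambda_2, integers b_1, b_2, positive integers n_1, n_2, and any sequence z: Q_{n_1,b_1}(lambda_1,z) * Q_{n_2,b_2}(lambda_2,z) equals the double sum over k=2..n_1+n_2 and l=1..n_2 of k! * C(lambda_1 + b_1*(k-l) + 1, k-l) * C(lambda_2 + b_2*l + 1, l) / [(lambda_1 + b_1*(k-l) + 1)*(lambda_2 + b_2*l + 1)*C(k,l)] * B_{n_1,k-l}(z) * B_{n_2,l}(z). -/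
open Finset

noncomputable def Q (n : ℕ) (b : ℤ) (lam : ℂ) (z : ℕ → ℂ) : ℂ :=
  ∑ k ∈ Finset.Icc 1 n,
    gchoose (lam + (b : ℂ) * (k : ℂ)) (k - 1) * ((k - 1).factorial : ℂ) * Bell n k z

/-
The `k`-th term of `Q_{n,b}(λ, z)` carries the falling factorial `C(x, k-1) (k-1)!` with
`x = λ + b k`, and `C(x, k-1) (k-1)! = C(x+1, k) k! / (x+1)`. A product of two such terms is
therefore `C(x+1, a) C(y+1, l) a! l! / ((x+1)(y+1))`, and `a! l! = (a+l)! / C(a+l, l)`.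
Expanding the product of the two sums and substituting `k = a + l` gives the double sum; the
extra terms it contains vanish because `B_{n₁, k-l} = 0` unless `1 ≤ k - l ≤ n₁`.
-/

lemma Bell_eq_zero_of_lt {n k : ℕ} (h : n < k) (z : ℕ → ℂ) : Bell n k z = 0 := by
  refine sum_eq_zero fun i hi => absurd hi ?_
  simp only [parts, mem_filter, not_and]
  rintro - hsum hwsum
  have : ∑ j : Fin n, i j ≤ ∑ j : Fin n, ((j : ℕ) + 1) * i j :=
    sum_le_sum fun j _ => Nat.le_mul_of_pos_left _ j.val.succ_pos
  omega

lemma Bell_zero_right_of_ne_zero {n : ℕ} (hn : n ≠ 0) (z : ℕ → ℂ) : Bell n 0 z = 0 := by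
  refine sum_eq_zero fun i hi => absurd hi ?_
  simp only [parts, mem_filter, not_and]
  rintro - hsum hwsum
  rw [sum_eq_zero_iff] at hsum
  rw [sum_eq_zero fun j hj => by rw [hsum j hj, mul_zero]] at hwsum
  exact hn hwsum.symm

lemma Bell_eq_zero_of_notMem_Icc {n k : ℕ} (hn : 1 ≤ n) (hk : k ∉ Icc 1 n) (z : ℕ → ℂ) :
    Bell n k z = 0 := by
  rw [mem_Icc, not_and_or, not_le, not_le, Nat.lt_one_iff] at hk
  rcases hk with rfl | hk
  · exact Bell_zero_right_of_ne_zero (by omega) z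
  · exact Bell_eq_zero_of_lt hk z

lemma gchoose_succ_mul_factorial (x : ℂ) (j : ℕ) :
    gchoose (x + 1) (j + 1) * ((j + 1).factorial : ℂ) = (x + 1) * (gchoose x j * j.factorial) := by
  have hprod :
      ∏ i ∈ range (j + 1), (x + 1 - (i : ℂ)) = (∏ i ∈ range j, (x - (i : ℂ))) * (x + 1) := by
    rw [prod_range_succ']
    push_cast
    ring_nf
  simp only [gchoose, hprod]
  have hfac (i : ℕ) : (i.factorial : ℂ) ≠ 0 := Nat.cast_ne_zero.2 i.factorial_ne_zero
  rw [div_mul_cancel₀ _ (hfac _), div_mul_cancel₀ _ (hfac _), mul_comm]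

lemma gchoose_mul_factorial_eq_div {x : ℂ} (hx : x + 1 ≠ 0) (j : ℕ) :
    gchoose x j * j.factorial = gchoose (x + 1) (j + 1) * ((j + 1).factorial : ℂ) / (x + 1) := by
  rw [gchoose_succ_mul_factorial, mul_div_cancel_left₀ _ hx]

lemma gchoose_pred_mul_factorial_mul {x y : ℂ} (hx : x + 1 ≠ 0) (hy : y + 1 ≠ 0) {a l : ℕ}
    (ha : 1 ≤ a) (hl : 1 ≤ l) :
    gchoose x (a - 1) * (a - 1).factorial * (gchoose y (l - 1) * (l - 1).factorial) =
      (a + l).factorial * gchoose (x + 1) a * gchoose (y + 1) l /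
        ((x + 1) * (y + 1) * (a + l).choose l) := by
  obtain ⟨a, rfl⟩ := Nat.exists_eq_add_of_le' ha
  obtain ⟨l, rfl⟩ := Nat.exists_eq_add_of_le' hl
  simp only [Nat.add_sub_cancel, gchoose_mul_factorial_eq_div hx, gchoose_mul_factorial_eq_div hy]
  have hfac : ((a + 1 + (l + 1)).choose (l + 1) * (a + 1).factorial * (l + 1).factorial : ℂ) =
      (a + 1 + (l + 1)).factorial := by
    exact_mod_cast Nat.add_choose_mul_factorial_mul_factorial _ _
  have hchoose : ((a + 1 + (l + 1)).choose (l + 1) : ℂ) ≠ 0 :=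
    Nat.cast_ne_zero.2 (Nat.choose_pos (by omega)).ne'
  rw [← hfac]
  field_simp

lemma sum_Icc_sum_Icc_add_left {M : Type*} [AddCommMonoid M] (m n : ℕ) (H : ℕ → ℕ → M)
    (hH : ∀ k l, k - l ∉ Icc 1 m → H k l = 0) :
    ∑ a ∈ Icc 1 m, ∑ l ∈ Icc 1 n, H (a + l) l = ∑ k ∈ Icc 2 (m + n), ∑ l ∈ Icc 1 n, H k l := by
  rw [← sum_product', ← sum_product']
  apply sum_of_injOn (fun p => (p.1 + p.2, p.2))
  · intro p _ q _ h
    simp only [Prod.mk.injEq] at h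
    exact Prod.ext (by omega) h.2
  · intro p hp
    simp only [coe_product, Set.mem_prod, mem_coe, mem_Icc] at hp ⊢
    omega
  · rintro ⟨k, l⟩ hkl hnot
    refine hH k l fun hk => hnot ⟨(k - l, l), ?_, ?_⟩
    · simp only [mem_product, coe_product, Set.mem_prod, mem_coe, mem_Icc] at hkl hk ⊢
      omega
    · rw [mem_Icc] at hk
      exact Prod.ext (Nat.sub_add_cancel (by omega)) rfl
  · exact fun _ _ => rfl

theorem stmt19_general (n1 n2 : ℕ) (hn1 : 1 ≤ n1) (b1 b2 : ℤ)
    (lam1 lam2 : ℂ) (z : ℕ → ℂ)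
    (h1 : ∀ j : ℕ, j ≤ n1 + n2 → lam1 + (b1 : ℂ) * (j : ℂ) + 1 ≠ 0)
    (h2 : ∀ j : ℕ, j ≤ n1 + n2 → lam2 + (b2 : ℂ) * (j : ℂ) + 1 ≠ 0) :
    Q n1 b1 lam1 z * Q n2 b2 lam2 z
      = ∑ k ∈ Finset.Icc 2 (n1 + n2), ∑ l ∈ Finset.Icc 1 n2,
          (k.factorial : ℂ) * gchoose (lam1 + (b1 : ℂ) * ((k - l : ℕ) : ℂ) + 1) (k - l) *
            gchoose (lam2 + (b2 : ℂ) * (l : ℂ) + 1) l /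
              ((lam1 + (b1 : ℂ) * ((k - l : ℕ) : ℂ) + 1) *
                (lam2 + (b2 : ℂ) * (l : ℂ) + 1) * (k.choose l : ℂ)) *
            Bell n1 (k - l) z * Bell n2 l z := by
  rw [← sum_Icc_sum_Icc_add_left n1 n2 _ fun k l hkl => by
    rw [Bell_eq_zero_of_notMem_Icc hn1 hkl, mul_zero, zero_mul], Q, Q, sum_mul_sum]
  refine sum_congr rfl fun a ha => sum_congr rfl fun l hl => ?_
  rw [mem_Icc] at ha hl
  rw [Nat.add_sub_cancel, ← gchoose_pred_mul_factorial_mul (h1 a (by omega)) (h2 l (by omega))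
    ha.1 hl.1]
  ring

theorem stmt19 (n1 n2 : ℕ) (hn1 : 1 ≤ n1) (hn2 : 1 ≤ n2) (b1 b2 : ℤ)
    (lam1 lam2 : ℂ) (z : ℕ → ℂ)
    (h1 : ∀ j : ℕ, j ≤ n1 + n2 → lam1 + (b1 : ℂ) * (j : ℂ) + 1 ≠ 0)
    (h2 : ∀ j : ℕ, j ≤ n1 + n2 → lam2 + (b2 : ℂ) * (j : ℂ) + 1 ≠ 0) :
    Q n1 b1 lam1 z * Q n2 b2 lam2 z
      = ∑ k ∈ Finset.Icc 2 (n1 + n2), ∑ l ∈ Finset.Icc 1 n2,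
          (k.factorial : ℂ) * gchoose (lam1 + (b1 : ℂ) * ((k - l : ℕ) : ℂ) + 1) (k - l) *
            gchoose (lam2 + (b2 : ℂ) * (l : ℂ) + 1) l /
              ((lam1 + (b1 : ℂ) * ((k - l : ℕ) : ℂ) + 1) *
                (lam2 + (b2 : ℂ) * (l : ℂ) + 1) * (k.choose l : ℂ)) *
            Bell n1 (k - l) z * Bell n2 l z :=
  stmt19_general n1 n2 hn1 b1 b2 lam1 lam2 z h1 h2
end
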